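/- Under the hypotheses of Theorem 1 with V(x̄_0, x_0) ≤ ε² where ε := max(√(V(x̄_0,x_0)), γ ū_max), and inputs ‖ū_ℓ‖ ≤ ū_max, for all ℓ ∈ ℕ: ‖M^{1/2}(x_ℓ − P x̄_ℓ)‖ ≤ ε. -/

import Mathlib

/-!
With `e ℓ := x ℓ - P x̄ ℓ`, the regulator equation `P Ā = A P + B Q` turns the closed loop into
`e (ℓ+1) = (A + B K) e ℓ + (B R - P B̄) ū ℓ`. The Lyapunov inequality makes `A + B K` a contraction
by the factor `ρ = √(1 - 2l)` in the norm `‖M^{1/2} ·‖`, so `a ℓ := ‖M^{1/2} e ℓ‖` satisfies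
`a (ℓ+1) ≤ ρ a ℓ + ‖M^{1/2}(B R - P B̄)‖ ū_max`. The ball of radius `ε` is invariant for this
recursion as soon as the input term is at most `(1 - ρ) ε`, which follows from `γ ū_max ≤ ε`
because `l ≤ (1 - √(1 - 2l)) √(1 - l)`.
-/

open Matrix

noncomputable def eunorm {n : ℕ} (v : Fin n → ℝ) : ℝ :=
  ‖(WithLp.equiv 2 (Fin n → ℝ)).symm v‖

/-- The square root `Matrix.PosSemidef.sqrt` of the older Mathlib, spelled out. -/
noncomputable def psdSqrt {n : ℕ} {A : Matrix (Fin n) (Fin n) ℝ} (hA : A.PosSemidef) :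
    Matrix (Fin n) (Fin n) ℝ :=
  hA.1.eigenvectorUnitary.1 * diagonal ((↑) ∘ (Real.sqrt ∘ hA.1.eigenvalues)) *
  (star hA.1.eigenvectorUnitary : Matrix (Fin n) (Fin n) ℝ)

noncomputable def specNorm {m n : ℕ} (A : Matrix (Fin m) (Fin n) ℝ) : ℝ :=
  ‖LinearMap.toContinuousLinearMap (Matrix.toEuclideanLin A)‖

section EuclideanNorm

variable {m n : ℕ}

lemma eunorm_nonneg (v : Fin n → ℝ) : 0 ≤ eunorm v := norm_nonneg _

lemma eunorm_sq (v : Fin n → ℝ) : eunorm v ^ 2 = v ⬝ᵥ v := by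
  rw [eunorm, EuclideanSpace.real_norm_sq_eq]
  simp [dotProduct, sq]

lemma eunorm_add_le (v w : Fin n → ℝ) : eunorm (v + w) ≤ eunorm v + eunorm w :=
  norm_add_le _ _

lemma eunorm_mulVec_le (A : Matrix (Fin m) (Fin n) ℝ) (v : Fin n → ℝ) :
    eunorm (A *ᵥ v) ≤ specNorm A * eunorm v := by
  simpa [eunorm, specNorm, Matrix.toLpLin_toLp] using
    (LinearMap.toContinuousLinearMap (Matrix.toEuclideanLin A)).le_opNorm
      ((WithLp.equiv 2 (Fin n → ℝ)).symm v)

end EuclideanNorm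

section SquareRoot

variable {n : ℕ} {A : Matrix (Fin n) (Fin n) ℝ}

lemma psdSqrt_transpose (hA : A.PosSemidef) : (psdSqrt hA)ᵀ = psdSqrt hA := by
  simp [psdSqrt, Matrix.transpose_mul, Matrix.star_eq_conjTranspose, Matrix.mul_assoc]

lemma psdSqrt_mul_self (hA : A.PosSemidef) : psdSqrt hA * psdSqrt hA = A := by
  set U : Matrix (Fin n) (Fin n) ℝ := hA.1.eigenvectorUnitary.1
  set D := diagonal ((↑) ∘ (Real.sqrt ∘ hA.1.eigenvalues) : Fin n → ℝ)
  have hU : star U * U = 1 := Unitary.coe_star_mul_self _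
  have hD : D * D = diagonal (RCLike.ofReal ∘ hA.1.eigenvalues) := by
    rw [diagonal_mul_diagonal]
    congr 1
    funext i
    simp [Real.mul_self_sqrt (hA.eigenvalues_nonneg i)]
  conv_rhs => rw [hA.1.spectral_theorem, Unitary.conjStarAlgAut_apply]
  calc U * D * star U * (U * D * star U) = U * (D * D) * star U := by
        simp only [← Matrix.mul_assoc]
        rw [Matrix.mul_assoc (U * D), hU, Matrix.mul_one, Matrix.mul_assoc U D D]
    _ = _ := by rw [hD]

lemma eunorm_psdSqrt_mulVec_sq (hA : A.PosSemidef) (v : Fin n → ℝ) :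
    eunorm (psdSqrt hA *ᵥ v) ^ 2 = v ⬝ᵥ A *ᵥ v := by
  conv_rhs => rw [← psdSqrt_mul_self hA, ← mulVec_mulVec, dotProduct_mulVec]
  nth_rewrite 2 [← psdSqrt_transpose hA]
  rw [eunorm_sq, vecMul_transpose, dotProduct_comm]

lemma eunorm_psdSqrt_mulVec_le_of_lyapunov (hA : A.PosSemidef) {F : Matrix (Fin n) (Fin n) ℝ}
    {c : ℝ} (hF : (c • A - (Fᵀ * A * F - A)).PosSemidef) (v : Fin n → ℝ) :
    eunorm (psdSqrt hA *ᵥ (F *ᵥ v)) ≤ √(1 + c) * eunorm (psdSqrt hA *ᵥ v) := by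
  have hquad : (F *ᵥ v) ⬝ᵥ A *ᵥ (F *ᵥ v) ≤ (1 + c) * (v ⬝ᵥ A *ᵥ v) := by
    have h := hF.dotProduct_mulVec_nonneg v
    simp only [star_trivial, sub_mulVec, smul_mulVec, dotProduct_sub, dotProduct_smul,
      smul_eq_mul, ← mulVec_mulVec, dotProduct_mulVec _ Fᵀ, vecMul_transpose] at h
    linarith
  rw [← eunorm_psdSqrt_mulVec_sq hA, ← eunorm_psdSqrt_mulVec_sq hA] at hquad
  calc eunorm (psdSqrt hA *ᵥ (F *ᵥ v)) = √(eunorm (psdSqrt hA *ᵥ (F *ᵥ v)) ^ 2) :=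
        (Real.sqrt_sq (eunorm_nonneg _)).symm
    _ ≤ √((1 + c) * eunorm (psdSqrt hA *ᵥ v) ^ 2) := Real.sqrt_le_sqrt hquad
    _ = √(1 + c) * eunorm (psdSqrt hA *ᵥ v) := by
        rw [Real.sqrt_mul' _ (sq_nonneg _), Real.sqrt_sq (eunorm_nonneg _)]

end SquareRoot

lemma tracking_error_succ {n nb m mb : ℕ} {A : Matrix (Fin n) (Fin n) ℝ}
    {B : Matrix (Fin n) (Fin m) ℝ} {Ab : Matrix (Fin nb) (Fin nb) ℝ}
    {Bb : Matrix (Fin nb) (Fin mb) ℝ} {P : Matrix (Fin n) (Fin nb) ℝ}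
    {Q : Matrix (Fin m) (Fin nb) ℝ} {R : Matrix (Fin m) (Fin mb) ℝ} {K : Matrix (Fin m) (Fin n) ℝ}
    (hPA : P * Ab = A * P + B * Q) (x : Fin n → ℝ) (xb : Fin nb → ℝ) (u : Fin mb → ℝ) :
    A *ᵥ x + B *ᵥ (R *ᵥ u + Q *ᵥ xb + K *ᵥ (x - P *ᵥ xb)) - P *ᵥ (Ab *ᵥ xb + Bb *ᵥ u) =
      (A + B * K) *ᵥ (x - P *ᵥ xb) + (B * R - P * Bb) *ᵥ u := by
  simp only [mulVec_add, mulVec_sub, add_mulVec, sub_mulVec, mulVec_mulVec, hPA,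
    Matrix.add_mul, Matrix.mul_assoc]
  abel

lemma forall_le_of_le_mul_add {a : ℕ → ℝ} {ρ w ε : ℝ} (hρ : 0 ≤ ρ) (hw : w ≤ (1 - ρ) * ε)
    (h0 : a 0 ≤ ε) (hstep : ∀ ℓ, a (ℓ + 1) ≤ ρ * a ℓ + w) (ℓ : ℕ) : a ℓ ≤ ε := by
  induction ℓ with
  | zero => exact h0
  | succ ℓ ih => nlinarith [hstep ℓ, mul_le_mul_of_nonneg_left ih hρ]

lemma le_one_sub_sqrt_mul_sqrt {l : ℝ} (hl0 : 0 ≤ l) (hl : l ≤ 1 / 2) :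
    l ≤ (1 - √(1 - 2 * l)) * √(1 - l) := by
  set s := √(1 - 2 * l)
  set t := √(1 - l)
  have hs : s ^ 2 = 1 - 2 * l := Real.sq_sqrt (by linarith)
  have ht : t ^ 2 = 1 - l := Real.sq_sqrt (by linarith)
  have hs0 : 0 ≤ s := Real.sqrt_nonneg _
  have hs1 : s ≤ 1 - l := (Real.sqrt_le_left (by linarith)).mpr (by nlinarith)
  -- `(1 + s) / 2 ≤ t` is the AM-QM inequality for `1` and `s`, and `(1 - s) (1 + s) = 2 l`.
  have hst : 1 + s ≤ 2 * t := le_of_pow_le_pow_left₀ two_ne_zero (by positivity) (by nlinarith)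
  nlinarith [mul_le_mul_of_nonneg_left hst (show 0 ≤ 1 - s by linarith)]

theorem stmt_17_general {n nb m mb : ℕ}
    (A_L : Matrix (Fin n) (Fin n) ℝ) (B_L : Matrix (Fin n) (Fin m) ℝ)
    (Ab_L : Matrix (Fin nb) (Fin nb) ℝ) (Bb_L : Matrix (Fin nb) (Fin mb) ℝ)
    (M : Matrix (Fin n) (Fin n) ℝ) (hM : M.PosDef)
    (K : Matrix (Fin m) (Fin n) ℝ) (l : ℝ) (hl0 : 0 < l) (hl : l < 1 / 2)
    (hcontr : ((-(2 * l)) • M -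
      ((A_L + B_L * K)ᵀ * M * (A_L + B_L * K) - M)).PosSemidef)
    (P : Matrix (Fin n) (Fin nb) ℝ) (Q : Matrix (Fin m) (Fin nb) ℝ)
    (hPA : P * Ab_L = A_L * P + B_L * Q)
    (R : Matrix (Fin m) (Fin mb) ℝ)
    (γ : ℝ)
    (hγ : γ = Real.sqrt (1 - l) / l * specNorm (psdSqrt hM.posSemidef * (B_L * R - P * Bb_L)))
    (ub_max : ℝ)
    (xb : ℕ → Fin nb → ℝ) (x : ℕ → Fin n → ℝ) (ub : ℕ → Fin mb → ℝ)
    (hub : ∀ ℓ, eunorm (ub ℓ) ≤ ub_max)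
    (hdyn' : ∀ ℓ, xb (ℓ + 1) = Ab_L.mulVec (xb ℓ) + Bb_L.mulVec (ub ℓ))
    (hdyn : ∀ ℓ, x (ℓ + 1) = A_L.mulVec (x ℓ) +
      B_L.mulVec (R.mulVec (ub ℓ) + Q.mulVec (xb ℓ) +
        K.mulVec (x ℓ - P.mulVec (xb ℓ))))
    (ε : ℝ)
    (hε : ε = max (Real.sqrt ((x 0 - P.mulVec (xb 0)) ⬝ᵥ
        M.mulVec (x 0 - P.mulVec (xb 0)))) (γ * ub_max))
    (hV0 : (x 0 - P.mulVec (xb 0)) ⬝ᵥ M.mulVec (x 0 - P.mulVec (xb 0)) ≤ ε ^ 2) :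
    ∀ ℓ : ℕ, eunorm ((psdSqrt hM.posSemidef).mulVec (x ℓ - P.mulVec (xb ℓ))) ≤ ε := by
  set S := psdSqrt hM.posSemidef
  set N := specNorm (S * (B_L * R - P * Bb_L))
  have hε0 : 0 ≤ ε := hε ▸ (Real.sqrt_nonneg _).trans (le_max_left _ _)
  have hinput : N * ub_max ≤ (1 - √(1 - 2 * l)) * ε := by
    have hγε : γ * ub_max ≤ ε := hε ▸ le_max_right _ _
    have ht : 0 < √(1 - l) := Real.sqrt_pos.2 (by linarith)
    calc N * ub_max = l / √(1 - l) * (γ * ub_max) := by rw [hγ]; field_simp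
      _ ≤ l / √(1 - l) * ε := mul_le_mul_of_nonneg_left hγε (by positivity)
      _ ≤ (1 - √(1 - 2 * l)) * ε := by
        gcongr
        rw [div_le_iff₀ ht]
        exact le_one_sub_sqrt_mul_sqrt hl0.le hl.le
  have h0 : eunorm (S *ᵥ (x 0 - P *ᵥ xb 0)) ≤ ε := by
    refine le_of_pow_le_pow_left₀ two_ne_zero hε0 ?_
    rwa [eunorm_psdSqrt_mulVec_sq]
  have hstep : ∀ ℓ, eunorm (S *ᵥ (x (ℓ + 1) - P *ᵥ xb (ℓ + 1))) ≤
      √(1 - 2 * l) * eunorm (S *ᵥ (x ℓ - P *ᵥ xb ℓ)) + N * ub_max := by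
    intro ℓ
    rw [hdyn, hdyn', tracking_error_succ hPA, mulVec_add, sub_eq_add_neg 1]
    refine (eunorm_add_le _ _).trans (add_le_add ?_ ?_)
    · exact eunorm_psdSqrt_mulVec_le_of_lyapunov hM.posSemidef hcontr _
    · rw [mulVec_mulVec]
      exact (eunorm_mulVec_le _ _).trans (mul_le_mul_of_nonneg_left (hub ℓ) (norm_nonneg _))
  exact forall_le_of_le_mul_add (Real.sqrt_nonneg _) hinput h0 hstep

/-- bound `‖M^{1/2}(x_ℓ − Px̄_ℓ)‖ ≤ ε` on the weighted state
tracking error, with `ε = max(√V(x̄₀,x₀), γ·ū_max)`. -/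
theorem stmt_17 {n nb m mb p : ℕ}
    (A_L : Matrix (Fin n) (Fin n) ℝ) (B_L : Matrix (Fin n) (Fin m) ℝ)
    (C : Matrix (Fin p) (Fin n) ℝ)
    (Ab_L : Matrix (Fin nb) (Fin nb) ℝ) (Bb_L : Matrix (Fin nb) (Fin mb) ℝ)
    (Cb : Matrix (Fin p) (Fin nb) ℝ)
    (M : Matrix (Fin n) (Fin n) ℝ) (hM : M.PosDef)
    (K : Matrix (Fin m) (Fin n) ℝ) (l : ℝ) (hl0 : 0 < l) (hl : l < 1 / 2)
    (hcontr : ((-(2 * l)) • M -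
      ((A_L + B_L * K)ᵀ * M * (A_L + B_L * K) - M)).PosSemidef)
    (hMC : (M - Cᵀ * C).PosSemidef)
    (P : Matrix (Fin n) (Fin nb) ℝ) (Q : Matrix (Fin m) (Fin nb) ℝ)
    (hCP : C * P = Cb) (hPA : P * Ab_L = A_L * P + B_L * Q)
    (R : Matrix (Fin m) (Fin mb) ℝ)
    (γ : ℝ)
    (hγ : γ = Real.sqrt (1 - l) / l * specNorm (psdSqrt hM.posSemidef * (B_L * R - P * Bb_L)))
    (ub_max : ℝ) (hub_max : 0 < ub_max)
    (xb : ℕ → Fin nb → ℝ) (x : ℕ → Fin n → ℝ) (ub : ℕ → Fin mb → ℝ)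
    (hub : ∀ ℓ, eunorm (ub ℓ) ≤ ub_max)
    (hdyn' : ∀ ℓ, xb (ℓ + 1) = Ab_L.mulVec (xb ℓ) + Bb_L.mulVec (ub ℓ))
    (hdyn : ∀ ℓ, x (ℓ + 1) = A_L.mulVec (x ℓ) +
      B_L.mulVec (R.mulVec (ub ℓ) + Q.mulVec (xb ℓ) +
        K.mulVec (x ℓ - P.mulVec (xb ℓ))))
    (ε : ℝ)
    (hε : ε = max (Real.sqrt ((x 0 - P.mulVec (xb 0)) ⬝ᵥ
        M.mulVec (x 0 - P.mulVec (xb 0)))) (γ * ub_max))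
    (hV0 : (x 0 - P.mulVec (xb 0)) ⬝ᵥ M.mulVec (x 0 - P.mulVec (xb 0)) ≤ ε ^ 2) :
    ∀ ℓ : ℕ, eunorm ((psdSqrt hM.posSemidef).mulVec (x ℓ - P.mulVec (xb ℓ))) ≤ ε :=
  stmt_17_general A_L B_L Ab_L Bb_L M hM K l hl0 hl hcontr P Q hPA R γ hγ ub_max xb x ub hub hdyn'
    hdyn ε hε hV0
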